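/- Suppose λ* < λ, where λ* is the optimal bottleneck length of a full Steiner tree of P with respect to S, and the optimal tree's skeleton T* is a subtree of MST(S). Then there exists a connected component T_j of the forest obtained from MST(S) by removing edges of length at least λ, such that for every p ∈ P there is a vertex s of T_j with (p,s) an edge of the Yao-type graph Υ₆(P,S) and |p s| ≤ λ*. -/

import Mathlib

/-- The point of the Euclidean plane with coordinates `(x, y)`. -/
noncomputable def pt (x y : ℝ) : EuclideanSpace ℝ (Fin 2) :=
  (WithLp.equiv 2 (Fin 2 → ℝ)).symm ![x, y]

/-- The unit direction of the `k`-th of six cones. -/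
noncomputable def dir (k : Fin 6) : EuclideanSpace ℝ (Fin 2) :=
  pt (Real.cos (k * Real.pi / 3)) (Real.sin (k * Real.pi / 3))

/-- Membership of `q` in the `k`-th cone of angular width `π/3` with apex `p`. -/
def inCone (p : EuclideanSpace ℝ (Fin 2)) (k : Fin 6)
    (q : EuclideanSpace ℝ (Fin 2)) : Prop :=
  InnerProductGeometry.angle (q - p) (dir k) ≤ Real.pi / 6

/-- Euclidean edge weight for graphs on the points of `S`. -/
noncomputable def euclWeight {S : Finset (EuclideanSpace ℝ (Fin 2))} :
    Sym2 ↥S → ℝ :=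
  Sym2.lift ⟨fun a b => dist (a : EuclideanSpace ℝ (Fin 2)) (b : EuclideanSpace ℝ (Fin 2)),
    fun _ _ => dist_comm _ _⟩

/-- Total Euclidean edge length of a graph on the points of `S`. -/
noncomputable def totalWeight {S : Finset (EuclideanSpace ℝ (Fin 2))}
    (G : SimpleGraph ↥S) : ℝ :=
  ∑ e ∈ (Set.toFinite G.edgeSet).toFinset, euclWeight e


/-!
The skeleton `H` is connected with all edges shorter than `λ`, so it lies in a single component `C`
of the truncated forest. For `p ∈ P` pick `s ∈ H` with `|ps| ≤ λ*` and let `s'` be the Yao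
neighbour of `p` in the cone containing `s`. The cone has opening `π/3` and `|ps'| ≤ |ps|`, so
`|s's| ≤ |ps| ≤ λ* < λ`. By the cycle property of minimum spanning trees every edge on the
`MST`-path from `s'` to `s` is at most `|s's| < λ`, hence `s'` lies in `C` too.
-/

namespace SimpleGraph

variable {V : Type*} {T : SimpleGraph V} {u v : V} {e : Sym2 V}

noncomputable def weight [Finite V] (w : Sym2 V → ℝ) (G : SimpleGraph V) : ℝ :=
  ∑ e ∈ (Set.toFinite G.edgeSet).toFinset, w e

lemma edgeSet_sup_edge_deleteEdges (he : e ∈ T.edgeSet) (huv : ¬ T.Adj u v) (hne : u ≠ v) :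
    ((T ⊔ edge u v).deleteEdges {e}).edgeSet = insert s(u, v) (T.edgeSet \ {e}) := by
  have hfe : s(u, v) ≠ e := by rintro rfl; exact huv he
  ext f
  simp only [edgeSet_deleteEdges, edgeSet_sup, edgeSet_edge_of_ne hne, Set.mem_sdiff,
    Set.mem_union, Set.mem_singleton_iff, Set.mem_insert_iff]
  constructor
  · rintro ⟨hf | rfl, hfe'⟩
    exacts [Or.inr ⟨hf, hfe'⟩, Or.inl rfl]
  · rintro (rfl | ⟨hf, hfe'⟩)
    exacts [⟨Or.inr rfl, hfe⟩, ⟨Or.inl hf, hfe'⟩]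

lemma IsTree.isTree_sup_edge_deleteEdges [Finite V] (hT : T.IsTree) {p : T.Walk u v}
    (hp : p.IsPath) (huv : ¬ T.Adj u v) (hne : u ≠ v) (he : e ∈ p.edges) :
    ((T ⊔ edge u v).deleteEdges {e}).IsTree := by
  have heT := p.edges_subset_edgeSet he
  rw [isTree_iff_connected_and_card]
  constructor
  · have hvu : (T ⊔ edge u v).Adj v u := Or.inr (by simp [edge_adj, hne.symm])
    have hcycle : (Walk.cons hvu (p.mapLe le_sup_left)).IsCycle := by
      rw [Walk.cons_isCycle_iff, Walk.edges_mapLe_eq_edges]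
      exact ⟨hp.mapLe le_sup_left, fun h ↦ huv (T.adj_symm (p.edges_subset_edgeSet h))⟩
    have hnb : ¬ (T ⊔ edge u v).IsBridge e := fun hb ↦
      hb.notMem_edges_of_isCycle hcycle (by simpa [Walk.edges_mapLe_eq_edges] using Or.inr he)
    induction e using Sym2.ind
    exact (hT.connected.mono le_sup_left).connected_delete_edge_of_not_isBridge hnb
  · have hs : s(u, v) ∉ T.edgeSet \ {e} := fun h ↦ huv h.1
    rw [Nat.card_coe_set_eq, edgeSet_sup_edge_deleteEdges heT huv hne,
      Set.ncard_insert_of_notMem hs, Set.ncard_sdiff_singleton_add_one heT,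
      ← Nat.card_coe_set_eq, (isTree_iff_connected_and_card.mp hT).2]

lemma weight_sup_edge_deleteEdges [Finite V] (w : Sym2 V → ℝ) (he : e ∈ T.edgeSet)
    (huv : ¬ T.Adj u v) (hne : u ≠ v) :
    ((T ⊔ edge u v).deleteEdges {e}).weight w = T.weight w - w e + w s(u, v) := by
  classical
  have hfin : (Set.toFinite ((T ⊔ edge u v).deleteEdges {e}).edgeSet).toFinset =
      insert s(u, v) ((Set.toFinite T.edgeSet).toFinset.erase e) := by
    ext f
    rw [Set.Finite.mem_toFinset, edgeSet_sup_edge_deleteEdges he huv hne]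
    simp [and_comm]
  have hs : s(u, v) ∉ (Set.toFinite T.edgeSet).toFinset.erase e := by simpa using fun _ ↦ huv
  rw [weight, hfin, Finset.sum_insert hs, weight,
    ← Finset.add_sum_erase _ _ ((Set.Finite.mem_toFinset _).mpr he)]
  ring

/-- The cycle property of minimum spanning trees. -/
theorem IsTree.weight_le_of_mem_edges [Finite V] (hT : T.IsTree) (w : Sym2 V → ℝ)
    (hmin : ∀ T' : SimpleGraph V, T'.IsTree → T.weight w ≤ T'.weight w)
    {p : T.Walk u v} (hp : p.IsPath) (he : e ∈ p.edges) : w e ≤ w s(u, v) := by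
  by_cases hfe : e = s(u, v)
  · rw [hfe]
  have hne : u ≠ v := by
    rintro rfl
    simp [Walk.edges_eq_nil.mpr (Walk.isPath_iff_nil.mp hp)] at he
  have huv : ¬ T.Adj u v := by
    intro hadj
    have hp₁ : p = Walk.cons hadj .nil := congrArg Subtype.val
      ((hT.isAcyclic.subsingleton_path u v).elim ⟨p, hp⟩ (Path.singleton hadj))
    simp [hp₁, hfe] at he
  have := hmin _ (hT.isTree_sup_edge_deleteEdges hp huv hne he)
  rw [weight_sup_edge_deleteEdges w (p.edges_subset_edgeSet he) huv hne] at this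
  linarith

theorem IsTree.reachable_deleteEdges_of_weight_lt [Finite V] (hT : T.IsTree) (w : Sym2 V → ℝ)
    (hmin : ∀ T' : SimpleGraph V, T'.IsTree → T.weight w ≤ T'.weight w) {l : ℝ}
    (huv : w s(u, v) < l) : (T.deleteEdges {e | l ≤ w e}).Reachable u v := by
  obtain ⟨p, hp, -⟩ := hT.existsUnique_path u v
  exact ⟨p.toDeleteEdges _ fun e he ↦
    not_le.mpr ((hT.weight_le_of_mem_edges w hmin hp he).trans_lt huv)⟩

theorem Subgraph.Connected.reachable_deleteEdges {G : SimpleGraph V} {H : G.Subgraph}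
    (hH : H.Connected) {s : Set (Sym2 V)} (hs : ∀ e ∈ H.edgeSet, e ∉ s) {x y : V}
    (hx : x ∈ H.verts) (hy : y ∈ H.verts) : (G.deleteEdges s).Reachable x y :=
  (hH ⟨x, hx⟩ ⟨y, hy⟩).map ⟨Subtype.val, fun {a b} (h : H.Adj a b) ↦
    (SimpleGraph.deleteEdges_adj ..).mpr ⟨H.adj_sub h, hs _ (H.mem_edgeSet.mpr h)⟩⟩

end SimpleGraph

open InnerProductGeometry Real

theorem norm_sub_le_of_angle_le_pi_div_three {V : Type*} [NormedAddCommGroup V]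
    [InnerProductSpace ℝ V] {x y : V} (hangle : angle x y ≤ π / 3) (hxy : ‖x‖ ≤ ‖y‖) :
    ‖x - y‖ ≤ ‖y‖ := by
  have hcos : 1 / 2 ≤ Real.cos (angle x y) := by
    rw [← Real.cos_pi_div_three]
    exact Real.cos_le_cos_of_nonneg_of_le_pi (angle_nonneg x y) (by linarith [pi_pos]) hangle
  have hlaw := norm_sub_sq_eq_norm_sq_add_norm_sq_sub_two_mul_norm_mul_norm_mul_cos_angle x y
  refine (pow_le_pow_iff_left₀ (norm_nonneg _) (norm_nonneg _) two_ne_zero).mp ?_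
  have := mul_nonneg (norm_nonneg x) (norm_nonneg y)
  nlinarith [mul_le_mul_of_nonneg_left hxy (norm_nonneg x)]

lemma orthonormalBasisOneI_repr_symm_dir (k : Fin 6) :
    Complex.orthonormalBasisOneI.repr.symm (dir k) =
      Complex.exp ((k * π / 3 : ℝ) * Complex.I) := by
  rw [Complex.exp_mul_I, ← Complex.ofReal_cos, ← Complex.ofReal_sin]
  simp [dir, pt]

theorem exists_inCone {p q : EuclideanSpace ℝ (Fin 2)} (hqp : q ≠ p) : ∃ k, inCone p k q := by
  set z := Complex.orthonormalBasisOneI.repr.symm (q - p)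
  have hz : z ≠ 0 := EmbeddingLike.map_ne_zero_iff.mpr (sub_ne_zero.mpr hqp)
  -- the cone is the one whose axis `m π / 3` is nearest to `arg z`, with `m` reduced mod 6
  obtain ⟨m, hm⟩ : ∃ m : ℤ, |z.arg / (π / 3) - m| ≤ 1 / 2 := ⟨_, abs_sub_round _⟩
  have hδ : |z.arg - m * (π / 3)| ≤ π / 6 := by
    have hsplit : z.arg - m * (π / 3) = (z.arg / (π / 3) - m) * (π / 3) := by field_simp
    rw [hsplit, abs_mul, abs_of_pos (by positivity : (0:ℝ) < π / 3)]
    linarith [mul_le_mul_of_nonneg_right hm (by positivity : (0:ℝ) ≤ π / 3)]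
  refine ⟨⟨(m % 6).toNat, by omega⟩, ?_⟩
  have hk : z.arg - (((m % 6).toNat : ℕ) : ℝ) * π / 3 =
      z.arg - m * (π / 3) + (m / 6) • (2 * π) := by
    have : (((m % 6).toNat : ℕ) : ℝ) = ((m % 6 : ℤ) : ℝ) :=
      mod_cast Int.toNat_of_nonneg (Int.emod_nonneg m (by norm_num))
    rw [this, Int.emod_def, zsmul_eq_mul]
    push_cast
    ring
  rw [inCone, ← Complex.orthonormalBasisOneI.repr.symm.toLinearIsometry.angle_map]
  change angle z (Complex.orthonormalBasisOneI.repr.symm (dir _)) ≤ _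
  rw [orthonormalBasisOneI_repr_symm_dir, ← Complex.norm_mul_exp_arg_mul_I z, ← Complex.real_smul,
    angle_smul_left_of_pos _ _ (norm_pos_iff.mpr hz), Complex.angle_exp_exp, hk,
    toIocMod_add_zsmul, (toIocMod_eq_self _).mpr ?_]
  · exact hδ
  · obtain ⟨h₁, h₂⟩ := abs_le.mp hδ
    constructor <;> linarith [pi_pos]

theorem dist_le_of_inCone {p q₁ q₂ : EuclideanSpace ℝ (Fin 2)} {k : Fin 6}
    (h₁ : inCone p k q₁) (h₂ : inCone p k q₂) (hle : dist p q₁ ≤ dist p q₂) :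
    dist q₁ q₂ ≤ dist p q₂ := by
  have hangle : angle (q₁ - p) (q₂ - p) ≤ π / 3 := by
    have := angle_le_angle_add_angle (q₁ - p) (dir k) (q₂ - p)
    rw [angle_comm (dir k)] at this
    unfold inCone at h₁ h₂
    linarith
  calc dist q₁ q₂ = ‖(q₁ - p) - (q₂ - p)‖ := by rw [sub_sub_sub_cancel_right, dist_eq_norm]
    _ ≤ ‖q₂ - p‖ := norm_sub_le_of_angle_le_pi_div_three hangle
          (by rwa [← dist_eq_norm, ← dist_eq_norm, dist_comm q₁, dist_comm q₂])
    _ = dist p q₂ := by rw [dist_comm, dist_eq_norm]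

theorem exists_near_of_forall_cone_nearest {S : Set (EuclideanSpace ℝ (Fin 2))}
    {p s : EuclideanSpace ℝ (Fin 2)} {R : EuclideanSpace ℝ (Fin 2) → Prop}
    (hnearest : ∀ k : Fin 6, (∃ s ∈ S, inCone p k s) →
      ∃ s' ∈ S, inCone p k s' ∧ R s' ∧ ∀ t ∈ S, inCone p k t → dist p s' ≤ dist p t)
    (hs : s ∈ S) (hsp : s ≠ p) :
    ∃ s' ∈ S, R s' ∧ dist p s' ≤ dist p s ∧ dist s' s ≤ dist p s := by
  obtain ⟨k, hk⟩ := exists_inCone hsp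
  obtain ⟨s', hs'S, hs'k, hR, hs'min⟩ := hnearest k ⟨s, hs, hk⟩
  have hps' := hs'min s hs hk
  exact ⟨s', hs'S, hR, hps', dist_le_of_inCone hs'k hk hps'⟩

open SimpleGraph

theorem component_with_yao_edges_general
    (P S : Finset (EuclideanSpace ℝ (Fin 2)))
    (hdisj : Disjoint P S)
    (MST : SimpleGraph ↥S) (hMST : MST.IsTree)
    (hmin : ∀ T' : SimpleGraph ↥S, T'.IsTree → totalWeight MST ≤ totalWeight T')
    (E : EuclideanSpace ℝ (Fin 2) → EuclideanSpace ℝ (Fin 2) → Prop)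
    (hYao : ∀ p ∈ P, ∀ k : Fin 6, (∃ s ∈ S, inCone p k s) →
      ∃ s' ∈ S, inCone p k s' ∧ E p s' ∧ ∀ t ∈ S, inCone p k t → dist p s' ≤ dist p t)
    (lamStar lam : ℝ) (hlt : lamStar < lam)
    (hopt : ∃ H : MST.Subgraph, H.Connected ∧
      (∀ e ∈ H.edgeSet, euclWeight e ≤ lamStar) ∧
      ∀ p ∈ P, ∃ sp : ↥S, sp ∈ H.verts ∧ dist p (sp : EuclideanSpace ℝ (Fin 2)) ≤ lamStar) :
    ∃ C : (MST.deleteEdges {e | lam ≤ euclWeight e}).ConnectedComponent,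
      ∀ p ∈ P, ∃ sv : ↥S,
        (MST.deleteEdges {e | lam ≤ euclWeight e}).connectedComponentMk sv = C ∧
        E p (sv : EuclideanSpace ℝ (Fin 2)) ∧
        dist p (sv : EuclideanSpace ℝ (Fin 2)) ≤ lamStar := by
  obtain ⟨H, hHconn, hHshort, hHcover⟩ := hopt
  set G := MST.deleteEdges {e | lam ≤ euclWeight e}
  have hHreach : ∀ x ∈ H.verts, ∀ y ∈ H.verts, G.Reachable x y := fun x hx y hy ↦
    hHconn.reachable_deleteEdges (fun e he ↦ not_le.mpr ((hHshort e he).trans_lt hlt)) hx hy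
  obtain ⟨v₀, hv₀⟩ := hHconn.nonempty
  refine ⟨G.connectedComponentMk v₀, fun p hp ↦ ?_⟩
  obtain ⟨s, hsH, hps⟩ := hHcover p hp
  have hsp : (s : EuclideanSpace ℝ (Fin 2)) ≠ p := fun h ↦
    Finset.disjoint_left.mp hdisj hp (h ▸ s.2)
  obtain ⟨s', hs'S, hE, hps', hs's⟩ := exists_near_of_forall_cone_nearest (hYao p hp) s.2 hsp
  have hs'reach : G.Reachable ⟨s', hs'S⟩ s :=
    hMST.reachable_deleteEdges_of_weight_lt euclWeight hmin ((hs's.trans hps).trans_lt hlt)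
  exact ⟨⟨s', hs'S⟩, ConnectedComponent.sound (hs'reach.trans (hHreach s hsH v₀ hv₀)), hE,
    hps'.trans hps⟩

/-- Suppose `λ* < λ`, where `λ*` is the optimal bottleneck length of a full
Steiner tree of `P` with respect to `S`, witnessed by an optimal tree whose skeleton is a
connected subgraph of `MST(S)` with all its edges of length `≤ λ*` and whose external edges
have length `≤ λ*`. Then some connected component `C` of the forest obtained from `MST(S)`
by removing the edges of length at least `λ` satisfies: for every `p ∈ P` there is a vertex
`s` of `C` with `(p,s)` an edge of the Yao-type graph `Υ₆(P,S)` and `dist p s ≤ λ*`. -/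
theorem component_with_yao_edges
    (P S : Finset (EuclideanSpace ℝ (Fin 2))) (hP : P.Nonempty) (hS : S.Nonempty)
    (hdisj : Disjoint P S)
    (MST : SimpleGraph ↥S) (hMST : MST.IsTree)
    (hmin : ∀ T' : SimpleGraph ↥S, T'.IsTree → totalWeight MST ≤ totalWeight T')
    (E : EuclideanSpace ℝ (Fin 2) → EuclideanSpace ℝ (Fin 2) → Prop)
    (hYao : ∀ p ∈ P, ∀ k : Fin 6, (∃ s ∈ S, inCone p k s) →
      ∃ s' ∈ S, inCone p k s' ∧ E p s' ∧ ∀ t ∈ S, inCone p k t → dist p s' ≤ dist p t)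
    (lamStar lam : ℝ) (hlt : lamStar < lam)
    (hopt : ∃ H : MST.Subgraph, H.Connected ∧
      (∀ e ∈ H.edgeSet, euclWeight e ≤ lamStar) ∧
      ∀ p ∈ P, ∃ sp : ↥S, sp ∈ H.verts ∧ dist p (sp : EuclideanSpace ℝ (Fin 2)) ≤ lamStar) :
    ∃ C : (MST.deleteEdges {e | lam ≤ euclWeight e}).ConnectedComponent,
      ∀ p ∈ P, ∃ sv : ↥S,
        (MST.deleteEdges {e | lam ≤ euclWeight e}).connectedComponentMk sv = C ∧
        E p (sv : EuclideanSpace ℝ (Fin 2)) ∧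
        dist p (sv : EuclideanSpace ℝ (Fin 2)) ≤ lamStar :=
  component_with_yao_edges_general P S hdisj MST hMST hmin E hYao lamStar lam hlt hopt
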